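/- arXiv:1407.3299 — 3 statements merged into one kernel-verified Lean document; each statement's English description precedes it below -/
import Mathlib

section
/- Let P be a finite p-group with a central series 1 = P₀ ≤ P₁ ≤ ⋯ ≤ P_k = P of length k < p, such that each P_i is generated by elements of order dividing p. Then every element of P has order dividing p (i.e., P has exponent p). -/
/-!
Induct along the series. The subgroup `C (j + 1)` has class at most `j + 1 < p`, and its derived
subgroup lies in `C j`, which has exponent `p` by induction. Since `C (j + 1)` is generated by
elements of order dividing `p`, it remains to show that in a group of class `< p` whose derived
subgroup has exponent `p`, the elements of order dividing `p` are closed under multiplication.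

This follows Lazard's method of polynomial sequences. Use the N-series `G i = γᵢ` of the lower
central series, with `γ₁` the whole group. The sequence `u n = y⁻ⁿ x⁻ⁿ (x y)ⁿ` is polynomial: its
`r`-th forward difference takes values in `G r`. Every polynomial sequence has a Hall–Petrescu
expansion `u n = ∏_{i ≤ c} B i ^ (n choose i)` with `B i ∈ G i`, where `c` is the class. The proof
is by induction on `c`: expand in the quotient by the central term `G c`, lift the expansion, and
expand the central error term with Newton's interpolation formula. From `u 0 = u 1 = 1` we get
`B 0 = B 1 = 1`. For `2 ≤ i < p`, `B i ∈ γ₂` has order dividing `p`, and `p ∣ p choose i`, so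
`u p = 1`.
-/

open Subgroup
open scoped commutatorElement

namespace Subgroup

variable {G : Type*} [Group G]

theorem commutator_commutator_le_of_rotate {N H₁ H₂ H₃ : Subgroup G} [N.Normal]
    (h1 : ⁅⁅H₂, H₃⁆, H₁⁆ ≤ N) (h2 : ⁅⁅H₃, H₁⁆, H₂⁆ ≤ N) : ⁅⁅H₁, H₂⁆, H₃⁆ ≤ N := by
  rw [← QuotientGroup.ker_mk' N, ← map_eq_bot_iff] at h1 h2 ⊢
  simp only [map_commutator] at h1 h2 ⊢
  exact commutator_commutator_eq_bot_of_rotate h1 h2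

theorem commutator_lowerCentralSeries_le (i j : ℕ) :
    ⁅(⊤ : Subgroup G).lowerCentralSeries i, (⊤ : Subgroup G).lowerCentralSeries j⁆ ≤
      (⊤ : Subgroup G).lowerCentralSeries (i + j + 1) := by
  induction j generalizing i with
  | zero => rfl
  | succ j ih =>
    rw [lowerCentralSeries_succ, commutator_comm]
    apply commutator_commutator_le_of_rotate
    · rw [commutator_comm ⊤, ← lowerCentralSeries_succ]
      exact (ih (i + 1)).trans_eq (by rw [show i + 1 + j + 1 = i + (j + 1) + 1 by omega])
    · exact commutator_mono (ih i) le_rfl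

theorem lowerCentralSeries_le_of_commutator_le {C : ℕ → Subgroup G}
    (hC : ∀ i, ⁅(⊤ : Subgroup G), C (i + 1)⁆ ≤ C i) (i j : ℕ) :
    (C (i + j)).lowerCentralSeries i ≤ C j := by
  induction i generalizing j with
  | zero => simp
  | succ i ih =>
    rw [lowerCentralSeries_succ, commutator_comm, add_right_comm]
    exact (commutator_mono le_top (ih (j + 1))).trans (hC j)

end Subgroup

section

variable {K K' : Type*} [Group K] [Group K']

theorem Pi.commutatorElement_apply {ι : Type*} (u v : ι → K) (i : ι) : ⁅u, v⁆ i = ⁅u i, v i⁆ :=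
  rfl

def mulFwdDiff (u : ℕ → K) : ℕ → K := fun n => u (n + 1) / u n

theorem mulFwdDiff_iterate_comp_add_one (u : ℕ → K) (r : ℕ) :
    mulFwdDiff^[r] (fun n => u (n + 1)) = fun n => mulFwdDiff^[r] u (n + 1) :=
  Function.Commute.iterate_left (f := mulFwdDiff) (g := fun u n => u (n + 1)) (fun _ => rfl) r u

theorem mulFwdDiff_iterate_comp (f : K →* K') (u : ℕ → K) (r : ℕ) :
    mulFwdDiff^[r] (f ∘ u) = f ∘ mulFwdDiff^[r] u :=
  (Function.Semiconj.iterate_right (f := (f ∘ ·)) (ga := mulFwdDiff) (gb := mulFwdDiff)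
    (fun _ => funext fun _ => map_div f _ _) r u).symm

theorem mulFwdDiff_iterate_mem {H : Subgroup K} {u : ℕ → K} (hu : ∀ n, u n ∈ H) (r n : ℕ) :
    mulFwdDiff^[r] u n ∈ H := by
  induction r generalizing u with
  | zero => exact hu n
  | succ r ih => exact ih fun n => div_mem (hu (n + 1)) (hu n)

theorem mulFwdDiff_iterate_one (r : ℕ) : mulFwdDiff^[r] (1 : ℕ → K) = 1 :=
  Function.iterate_fixed (funext fun _ => div_one 1) r

theorem mulFwdDiff_mul (u v : ℕ → K) :
    mulFwdDiff (u * v) =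
      (fun n => u (n + 1)) * mulFwdDiff v * (fun n => u (n + 1))⁻¹ * mulFwdDiff u := by
  funext n
  simp only [mulFwdDiff, Pi.mul_apply, Pi.inv_apply, div_eq_mul_inv]
  group

theorem mulFwdDiff_inv (u : ℕ → K) :
    mulFwdDiff u⁻¹ =
      (fun n => u (n + 1))⁻¹ * (mulFwdDiff u)⁻¹ * (fun n => u (n + 1))⁻¹⁻¹ := by
  funext n
  simp only [mulFwdDiff, Pi.mul_apply, Pi.inv_apply, div_eq_mul_inv]
  group

theorem mulFwdDiff_commutator (u v : ℕ → K) :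
    mulFwdDiff ⁅u, v⁆ =
      mulFwdDiff u * ⁅u, mulFwdDiff v⁆ * (mulFwdDiff u)⁻¹ *
        (mulFwdDiff u * ⁅mulFwdDiff v, ⁅u, v⁆⁆ * (mulFwdDiff u)⁻¹) *
        ⁅mulFwdDiff u, ⁅u, v⁆⁆ *
        (⁅u, v⁆ * ⁅mulFwdDiff u, mulFwdDiff v⁆ * ⁅u, v⁆⁻¹) *
        (⁅u, v⁆ * (mulFwdDiff v * ⁅mulFwdDiff u, v⁆ * (mulFwdDiff v)⁻¹) * ⁅u, v⁆⁻¹) := by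
  funext n
  change ⁅u (n + 1), v (n + 1)⁆ / ⁅u n, v n⁆ = _
  have hu : u (n + 1) = mulFwdDiff u n * u n := (div_mul_cancel _ _).symm
  have hv : v (n + 1) = mulFwdDiff v n * v n := (div_mul_cancel _ _).symm
  simp only [hu, hv, Pi.mul_apply, Pi.inv_apply, Pi.commutatorElement_apply]
  generalize mulFwdDiff u n = a, mulFwdDiff v n = b
  simp only [commutatorElement_def, div_eq_mul_inv]
  group

theorem mulFwdDiff_pow_choose_succ (b : K) (i : ℕ) :
    mulFwdDiff (fun n => b ^ n.choose (i + 1)) = fun n => b ^ n.choose i :=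
  funext fun n => by simp [mulFwdDiff, Nat.choose_succ_succ', pow_add]

theorem mulFwdDiff_iterate_pow_choose (b : K) (i r : ℕ) :
    mulFwdDiff^[r] (fun n => b ^ n.choose (i + r)) = fun n => b ^ n.choose i := by
  induction r generalizing i with
  | zero => rfl
  | succ r ih => rw [Function.iterate_succ_apply, ← add_assoc, mulFwdDiff_pow_choose_succ, ih]

theorem mulFwdDiff_iterate_pow_choose_of_lt (b : K) {i r : ℕ} (h : i < r) :
    mulFwdDiff^[r] (fun n => b ^ n.choose i) = 1 := by
  obtain ⟨s, rfl⟩ := Nat.exists_eq_add_of_lt h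
  have hi := mulFwdDiff_iterate_pow_choose b 0 i
  rw [zero_add] at hi
  rw [show i + s + 1 = s + 1 + i by omega, Function.iterate_add_apply, hi,
    Function.iterate_succ_apply]
  convert mulFwdDiff_iterate_one s
  funext n
  simp [mulFwdDiff]

structure IsNSeries (G : ℕ → Subgroup K) : Prop where
  antitone : Antitone G
  commutator_le : ∀ i j, ⁅G i, G j⁆ ≤ G (i + j)

variable {G : ℕ → Subgroup K}

theorem isNSeries_lowerCentralSeries :
    IsNSeries fun i => (⊤ : Subgroup K).lowerCentralSeries (i - 1) where
  antitone _ _ h := Subgroup.lowerCentralSeries_antitone _ (by omega)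
  commutator_le _ _ :=
    (commutator_lowerCentralSeries_le _ _).trans (Subgroup.lowerCentralSeries_antitone _ (by omega))

theorem IsNSeries.map (hG : IsNSeries G) (f : K →* K') : IsNSeries fun i => (G i).map f where
  antitone _ _ hij := map_mono (hG.antitone hij)
  commutator_le i j := by
    simp only [← map_commutator]
    exact map_mono (hG.commutator_le i j)

theorem IsNSeries.commutator_mem (hG : IsNSeries G) {a d b e : ℕ} {x y : K}
    (hx : x ∈ G (max a d)) (hy : y ∈ G (max b e)) : ⁅x, y⁆ ∈ G (max (a + b) (d + e)) :=
  hG.antitone (by omega) (hG.commutator_le _ _ (commutator_mem_commutator hx hy))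

theorem IsNSeries.le_center (hG : IsNSeries G) (htop : G 1 = ⊤) {c : ℕ} (hbot : G (c + 1) = ⊥) :
    G c ≤ center K := by
  have h := hG.commutator_le c 1
  rwa [htop, hbot, le_bot_iff, commutator_eq_bot_iff_le_centralizer, coe_top,
    centralizer_univ] at h

/-- Lazard's polynomial sequences, truncated at order `R`. The truncation makes closure under
products and commutators (`PolySeqClosed`) provable by induction on `R`. -/
def IsPolySeq (G : ℕ → Subgroup K) (R a d : ℕ) (u : ℕ → K) : Prop :=
  ∀ r ≤ R, ∀ n, mulFwdDiff^[r] u n ∈ G (max a (r + d))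

variable {R a d b e : ℕ} {u v : ℕ → K}

namespace IsPolySeq

theorem mono (hu : IsPolySeq G R a d u) (hG : Antitone G) {a' d' : ℕ} (ha : a' ≤ a)
    (hd : d' ≤ d) : IsPolySeq G R a' d' u :=
  fun r hr n => hG (by omega) (hu r hr n)

theorem restrict (hu : IsPolySeq G R a d u) {R' : ℕ} (hR : R' ≤ R) : IsPolySeq G R' a d u :=
  fun r hr => hu r (hr.trans hR)

theorem mem (hu : IsPolySeq G R a d u) (n : ℕ) : u n ∈ G (max a d) := by
  simpa using hu 0 (Nat.zero_le R) n

theorem comp_add_one (hu : IsPolySeq G R a d u) : IsPolySeq G R a d fun n => u (n + 1) :=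
  fun r hr n => by
    rw [mulFwdDiff_iterate_comp_add_one]
    exact hu r hr (n + 1)

theorem map (hu : IsPolySeq G R a d u) (f : K →* K') :
    IsPolySeq (fun i => (G i).map f) R a d (f ∘ u) := fun r hr n => by
  rw [mulFwdDiff_iterate_comp]
  exact mem_map_of_mem f (hu r hr n)

end IsPolySeq

theorem isPolySeq_zero_iff : IsPolySeq G 0 a d u ↔ ∀ n, u n ∈ G (max a d) :=
  ⟨IsPolySeq.mem, fun h r hr n => by simpa [Nat.le_zero.mp hr] using h n⟩

theorem isPolySeq_succ_iff :
    IsPolySeq G (R + 1) a d u ↔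
      (∀ n, u n ∈ G (max a d)) ∧ IsPolySeq G R a (d + 1) (mulFwdDiff u) := by
  refine ⟨fun hu => ⟨hu.mem, fun r hr n => ?_⟩, fun ⟨h0, hd⟩ r hr n => ?_⟩
  · rw [← add_assoc, add_right_comm]
    exact hu (r + 1) (by omega) n
  · cases r with
    | zero => simpa using h0 n
    | succ r =>
      rw [add_right_comm, add_assoc]
      exact hd r (by omega) n

variable (G) in
def PolySeqClosed (R : ℕ) : Prop :=
  (∀ {a d : ℕ} {u v : ℕ → K},
    IsPolySeq G R a d u → IsPolySeq G R a d v → IsPolySeq G R a d (u * v)) ∧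
  (∀ {a d : ℕ} {u : ℕ → K}, IsPolySeq G R a d u → IsPolySeq G R a d u⁻¹) ∧
  (∀ {a d b e : ℕ} {u v : ℕ → K},
    IsPolySeq G R a d u → IsPolySeq G R b e v → IsPolySeq G R (a + b) (d + e) ⁅u, v⁆)

namespace PolySeqClosed

theorem conj (h : PolySeqClosed G R) (hG : Antitone G) {g w : ℕ → K}
    (hg : IsPolySeq G R a d g) (hw : IsPolySeq G R b e w) : IsPolySeq G R b e (g * w * g⁻¹) := by
  rw [show g * w * g⁻¹ = ⁅g, w⁆ * w by group]
  exact h.1 ((h.2.2 hg hw).mono hG (by omega) (by omega)) hw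

theorem commutator_succ (h : PolySeqClosed G R) (hG : IsNSeries G)
    (hu : IsPolySeq G (R + 1) a d u) (hv : IsPolySeq G (R + 1) b e v) :
    IsPolySeq G (R + 1) (a + b) (d + e) ⁅u, v⁆ := by
  have hG' := hG.antitone
  obtain ⟨hu₀, hΔu⟩ := isPolySeq_succ_iff.mp hu
  obtain ⟨hv₀, hΔv⟩ := isPolySeq_succ_iff.mp hv
  have hw := h.2.2 (hu.restrict R.le_succ) (hv.restrict R.le_succ)
  refine isPolySeq_succ_iff.mpr ⟨fun n => hG.commutator_mem (hu₀ n) (hv₀ n), ?_⟩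
  rw [mulFwdDiff_commutator]
  refine h.1 (h.1 (h.1 (h.1 ?_ ?_) ?_) ?_) ?_
  · exact h.conj hG' hΔu ((h.2.2 (hu.restrict R.le_succ) hΔv).mono hG' le_rfl (by omega))
  · exact h.conj hG' hΔu ((h.2.2 hΔv hw).mono hG' (by omega) (by omega))
  · exact (h.2.2 hΔu hw).mono hG' (by omega) (by omega)
  · exact h.conj hG' hw ((h.2.2 hΔu hΔv).mono hG' (by omega) (by omega))
  · exact h.conj hG' hw (h.conj hG' hΔv
      ((h.2.2 hΔu (hv.restrict R.le_succ)).mono hG' (by omega) (by omega)))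

theorem succ (h : PolySeqClosed G R) (hG : IsNSeries G) : PolySeqClosed G (R + 1) := by
  refine ⟨fun hu hv => ?_, fun hu => ?_, h.commutator_succ hG⟩
  · obtain ⟨hu₀, hΔu⟩ := isPolySeq_succ_iff.mp hu
    obtain ⟨hv₀, hΔv⟩ := isPolySeq_succ_iff.mp hv
    refine isPolySeq_succ_iff.mpr ⟨fun n => mul_mem (hu₀ n) (hv₀ n), ?_⟩
    rw [mulFwdDiff_mul]
    exact h.1 (h.conj hG.antitone (hu.restrict R.le_succ).comp_add_one hΔv) hΔu
  · obtain ⟨hu₀, hΔu⟩ := isPolySeq_succ_iff.mp hu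
    refine isPolySeq_succ_iff.mpr ⟨fun n => inv_mem (hu₀ n), ?_⟩
    rw [mulFwdDiff_inv]
    exact h.conj hG.antitone (h.2.1 (hu.restrict R.le_succ).comp_add_one) (h.2.1 hΔu)

end PolySeqClosed

theorem IsNSeries.polySeqClosed (hG : IsNSeries G) (R : ℕ) : PolySeqClosed G R := by
  induction R with
  | zero =>
    simp only [PolySeqClosed, isPolySeq_zero_iff]
    exact ⟨fun hu hv n => mul_mem (hu n) (hv n), fun hu n => inv_mem (hu n),
      fun hu hv n => hG.commutator_mem (hu n) (hv n)⟩
  | succ R ih => exact ih.succ hG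

theorem IsPolySeq.mul (hG : IsNSeries G) (hu : IsPolySeq G R a d u) (hv : IsPolySeq G R a d v) :
    IsPolySeq G R a d (u * v) :=
  (hG.polySeqClosed R).1 hu hv

theorem IsPolySeq.inv (hG : IsNSeries G) (hu : IsPolySeq G R a d u) : IsPolySeq G R a d u⁻¹ :=
  (hG.polySeqClosed R).2.1 hu

theorem isPolySeq_one : IsPolySeq G R a d 1 := fun r _ n => by
  rw [mulFwdDiff_iterate_one]
  exact one_mem _

theorem isPolySeq_pow_choose (hG : Antitone G) {b : K} {i : ℕ} (hb : b ∈ G (max a (i + d))) :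
    IsPolySeq G R a d fun n => b ^ n.choose i := fun r _ n => by
  rcases le_or_gt r i with h | h
  · obtain ⟨j, rfl⟩ := Nat.exists_eq_add_of_le' h
    rw [mulFwdDiff_iterate_pow_choose]
    exact hG (by omega) (pow_mem hb _)
  · rw [mulFwdDiff_iterate_pow_choose_of_lt b h]
    exact one_mem _

theorem isPolySeq_list_prod_pow_choose (hG : IsNSeries G) {B : ℕ → K}
    (hB : ∀ i, B i ∈ G (max a (i + d))) (m : ℕ) :
    IsPolySeq G R a d fun n => ((List.range m).map fun i => B i ^ n.choose i).prod := by
  induction m with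
  | zero => exact isPolySeq_one
  | succ m ih =>
    simp only [List.prod_range_succ]
    exact ih.mul hG (isPolySeq_pow_choose hG.antitone (hB m))

theorem CommGroup.eq_prod_pow_choose_mulFwdDiff {M : Type*} [CommGroup M] (w : ℕ → M) {m : ℕ}
    (hm : mulFwdDiff^[m] w = 1) (n : ℕ) :
    w n = ∏ k ∈ Finset.range m, mulFwdDiff^[k] w 0 ^ n.choose k := by
  have hdiff (k : ℕ) :
      (fwdDiff 1)^[k] (Additive.ofMul ∘ w) = Additive.ofMul ∘ mulFwdDiff^[k] w :=
    (Function.Semiconj.iterate_right (f := (Additive.ofMul ∘ ·)) (ga := mulFwdDiff)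
      (gb := fwdDiff 1) (fun _ => rfl) k w).symm
  have hnewton :=
    congrArg Additive.toMul (shift_eq_sum_fwdDiff_iter 1 (Additive.ofMul ∘ w) n 0)
  simp only [hdiff, zero_add, smul_eq_mul, mul_one, toMul_sum, Function.comp_apply, toMul_nsmul,
    toMul_ofMul] at hnewton
  have hvanish (k : ℕ) (hk : m ≤ k) : mulFwdDiff^[k] w = 1 := by
    rw [← Nat.sub_add_cancel hk, Function.iterate_add_apply, hm, mulFwdDiff_iterate_one]
  rw [hnewton, Finset.prod_subset (Finset.range_subset_range.mpr (Nat.le_add_right (n + 1) m)),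
    ← Finset.prod_subset (Finset.range_subset_range.mpr (Nat.le_add_left m (n + 1)))]
  · intro k _ hk
    simp [hvanish k (by simpa using hk)]
  · intro k _ hk
    simp [Nat.choose_eq_zero_of_lt (by simpa using hk : n < k)]

open scoped IsMulCommutative in
theorem eq_list_prod_pow_choose_of_mem_center {w : ℕ → K} (hw : ∀ n, w n ∈ center K) {m : ℕ}
    (hm : mulFwdDiff^[m] w = 1) (n : ℕ) :
    w n = ((List.range m).map fun k => mulFwdDiff^[k] w 0 ^ n.choose k).prod := by
  let w' : ℕ → center K := fun n => ⟨w n, hw n⟩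
  have hcoe (k : ℕ) : (center K).subtype ∘ mulFwdDiff^[k] w' = mulFwdDiff^[k] w :=
    (mulFwdDiff_iterate_comp (center K).subtype w' k).symm
  have hm' : mulFwdDiff^[m] w' = 1 :=
    funext fun n => Subtype.ext (by simpa [hm] using congrFun (hcoe m) n)
  have h := congrArg Subtype.val (CommGroup.eq_prod_pow_choose_mulFwdDiff w' hm' n)
  rw [Finset.prod_eq_multiset_prod, Finset.range_val, Multiset.range, Multiset.map_coe,
    Multiset.prod_coe, SubmonoidClass.coe_list_prod] at h
  simpa [← hcoe, Function.comp_def] using h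

theorem list_prod_map_mul_of_mem_center {ι : Type*} (l : List ι) (f g : ι → K)
    (hg : ∀ i, g i ∈ center K) :
    (l.map fun i => f i * g i).prod = (l.map f).prod * (l.map g).prod := by
  induction l with
  | nil => simp
  | cons i l ih =>
    simp only [List.map_cons, List.prod_cons, ih]
    rw [mul_assoc, ← mul_assoc (g i), ← mem_center_iff.mp (hg i)]
    simp only [mul_assoc]

theorem list_prod_pow_choose_mul_of_mem_center (B z : ℕ → K) (hz : ∀ i, z i ∈ center K)
    (m n : ℕ) :
    ((List.range m).map fun i => B i ^ n.choose i).prod *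
        ((List.range m).map fun i => z i ^ n.choose i).prod =
      ((List.range m).map fun i => (B i * z i) ^ n.choose i).prod := by
  have hmul_pow (i : ℕ) : (B i * z i) ^ n.choose i = B i ^ n.choose i * z i ^ n.choose i :=
    Commute.mul_pow (mem_center_iff.mp (hz i) (B i)) _
  simp only [hmul_pow]
  exact (list_prod_map_mul_of_mem_center _ _ _ fun i => pow_mem (hz i) _).symm

theorem IsNSeries.exists_list_prod_pow_choose (c : ℕ) (hG : IsNSeries G) (htop : G 1 = ⊤)
    (hbot : G (c + 1) = ⊥) (hu : ∀ R, IsPolySeq G R 0 0 u) :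
    ∃ B : ℕ → K, (∀ i, B i ∈ G i) ∧
      ∀ n, u n = ((List.range (c + 1)).map fun i => B i ^ n.choose i).prod := by
  induction c generalizing K with
  | zero =>
    have htriv (x : K) : x = 1 := by simpa [← htop, hbot] using mem_top x
    exact ⟨1, fun i => one_mem _, fun n => by simp [htriv (u n)]⟩
  | succ c ih =>
    set Z := G (c + 1)
    have hZ : Z ≤ center K := hG.le_center htop hbot
    have : Z.Normal := ⟨fun z hz g => by rwa [mem_center_iff.mp (hZ hz) g, mul_inv_cancel_right]⟩
    set π := QuotientGroup.mk' Z
    have hbotπ : (G (c + 1)).map π = ⊥ := by rw [Subgroup.map_eq_bot_iff, QuotientGroup.ker_mk']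
    obtain ⟨Bq, hBq, hBqu⟩ := ih (hG.map π)
      (by rw [htop, map_top_of_surjective π (QuotientGroup.mk'_surjective Z)]) hbotπ
      fun R => (hu R).map π
    choose Bl hBl hπBl using fun i => mem_map.mp (hBq i)
    set v : ℕ → K := fun n => ((List.range (c + 2)).map fun i => Bl i ^ n.choose i).prod
    set w : ℕ → K := v⁻¹ * u
    have hw (R : ℕ) : IsPolySeq G R 0 0 w :=
      ((isPolySeq_list_prod_pow_choose hG (by simpa using hBl) _).inv hG).mul hG (hu R)
    have hwZ (n : ℕ) : w n ∈ Z := by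
      have hBq_last : Bq (c + 1) = 1 := by simpa [hbotπ] using hBq (c + 1)
      have hπv : π (v n) = π (u n) := by
        rw [show π (u n) = _ from hBqu n]
        simp only [v, List.prod_range_succ _ (c + 1), map_mul, map_list_prod, List.map_map,
          Function.comp_def, map_pow, hπBl, hBq_last, one_pow, mul_one]
      rw [← QuotientGroup.ker_mk' Z, MonoidHom.mem_ker]
      change π ((v n)⁻¹ * u n) = 1
      rw [map_mul, map_inv, hπv, inv_mul_cancel]
    have hΔw : mulFwdDiff^[c + 2] w = 1 :=
      funext fun n => by simpa [hbot] using hw (c + 2) (c + 2) le_rfl n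
    refine ⟨fun i => Bl i * mulFwdDiff^[i] w 0,
      fun i => mul_mem (hBl i) (by simpa using hw i i le_rfl 0), fun n => ?_⟩
    rw [← mul_inv_cancel_left (v n) (u n)]
    change v n * w n = _
    rw [eq_list_prod_pow_choose_of_mem_center (fun n => hZ (hwZ n)) hΔw n]
    exact list_prod_pow_choose_mul_of_mem_center _ _
      (mulFwdDiff_iterate_mem (fun n => hZ (hwZ n)) · 0) _ _

theorem list_prod_range_pow_choose_eq (B : ℕ → K) (m n : ℕ)
    (h : ∀ i, 2 ≤ i → i < m + 2 → B i ^ n.choose i = 1) :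
    ((List.range (m + 2)).map fun i => B i ^ n.choose i).prod = B 0 * B 1 ^ n := by
  rw [List.prod_range_succ', List.prod_range_succ', List.prod_eq_one]
  · simp
  · simp only [List.mem_map, List.mem_range]
    rintro _ ⟨i, hi, rfl⟩
    exact h (i + 2) (by omega) (by omega)

theorem mul_pow_eq_one_of_lowerCentralSeries_eq_bot {p : ℕ} (hp : p.Prime)
    (hclass : (⊤ : Subgroup K).lowerCentralSeries (p - 1) = ⊥)
    (hexp : ∀ g ∈ (⊤ : Subgroup K).lowerCentralSeries 1, g ^ p = 1) {x y : K} (hx : x ^ p = 1)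
    (hy : y ^ p = 1) : (x * y) ^ p = 1 := by
  obtain ⟨m, rfl⟩ : ∃ m, p = m + 2 := ⟨p - 2, by have := hp.two_le; omega⟩
  have hG := isNSeries_lowerCentralSeries (K := K)
  have hpow (g : K) (R : ℕ) :
      IsPolySeq (fun i => (⊤ : Subgroup K).lowerCentralSeries (i - 1)) R 0 0 fun n => g ^ n := by
    simpa using isPolySeq_pow_choose hG.antitone (i := 1) (R := R) (a := 0) (d := 0) (mem_top g)
  obtain ⟨B, hB, hBu⟩ := hG.exists_list_prod_pow_choose (m + 1) rfl (by simpa using hclass)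
    fun R => ((hpow y⁻¹ R).mul hG (hpow x⁻¹ R)).mul hG (hpow (x * y) R)
  have h0 := (hBu 0).trans <| list_prod_range_pow_choose_eq B m 0 fun i hi _ => by
    simp [Nat.choose_eq_zero_of_lt (by omega : 0 < i)]
  have h1 := (hBu 1).trans <| list_prod_range_pow_choose_eq B m 1 fun i hi _ => by
    simp [Nat.choose_eq_zero_of_lt (by omega : 1 < i)]
  have hp' := (hBu (m + 2)).trans <| list_prod_range_pow_choose_eq B m (m + 2) fun i hi hi' => by
    obtain ⟨t, ht⟩ := hp.dvd_choose_self (by omega) hi'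
    rw [ht, pow_mul, hexp _ (Subgroup.lowerCentralSeries_antitone _ (by omega) (hB i)), one_pow]
  simp only [Pi.mul_apply, pow_zero, mul_one, pow_one, inv_pow, hx, hy, inv_one, one_mul]
    at h0 h1 hp'
  rw [← h0, one_mul, show y⁻¹ * x⁻¹ * (x * y) = 1 by group] at h1
  rw [hp', ← h0, ← h1, one_pow, one_mul]

theorem Subgroup.mul_pow_eq_one_of_lowerCentralSeries_eq_bot (H : Subgroup K) {p : ℕ}
    (hp : p.Prime) (hclass : H.lowerCentralSeries (p - 1) = ⊥)
    (hexp : ∀ g ∈ H.lowerCentralSeries 1, g ^ p = 1) {x y : K} (hxH : x ∈ H) (hyH : y ∈ H)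
    (hx : x ^ p = 1) (hy : y ^ p = 1) : (x * y) ^ p = 1 := by
  refine congrArg Subtype.val (_root_.mul_pow_eq_one_of_lowerCentralSeries_eq_bot (K := H) hp ?_
    (fun g hg => Subtype.ext ?_) (x := ⟨x, hxH⟩) (y := ⟨y, hyH⟩) (Subtype.ext hx) (Subtype.ext hy))
  · rw [← (map_injective H.subtype_injective).eq_iff, top_subtype_lowerCentralSeries, hclass,
      map_bot]
  · exact hexp g (top_subtype_lowerCentralSeries H 1 ▸ mem_map_of_mem _ hg)

theorem Subgroup.pow_eq_one_of_eq_closure {H : Subgroup K} {p : ℕ}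
    (hgen : H = closure {x | x ∈ H ∧ x ^ p = 1})
    (hmul : ∀ x ∈ H, ∀ y ∈ H, x ^ p = 1 → y ^ p = 1 → (x * y) ^ p = 1) :
    ∀ g ∈ H, g ^ p = 1 := by
  intro g hg
  rw [hgen] at hg
  induction hg using closure_induction with
  | mem x hx => exact hx.2
  | one => exact one_pow p
  | mul x y hx hy hxp hyp => exact hmul x (hgen ▸ hx) y (hgen ▸ hy) hxp hyp
  | inv x _ hxp => rw [inv_pow, hxp, inv_one]

end

theorem stmt0_general {P : Type*} [Group P] (p : ℕ) (hp : p.Prime)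
    (k : ℕ) (hk : k < p)
    (C : ℕ → Subgroup P)
    (h0 : C 0 = ⊥) (htop : C k = ⊤)
    (hcentral : ∀ i, ⁅(⊤ : Subgroup P), C (i + 1)⁆ ≤ C i)
    (hgen : ∀ i, C i = Subgroup.closure {x : P | x ∈ C i ∧ x ^ p = 1}) :
    ∀ x : P, x ^ p = 1 := by
  have key : ∀ j ≤ k, ∀ g ∈ C j, g ^ p = 1 := by
    intro j
    induction j with
    | zero =>
      intro _ g hg
      rw [h0, mem_bot] at hg
      rw [hg, one_pow]
    | succ j ih =>
      intro hj
      refine pow_eq_one_of_eq_closure (hgen (j + 1)) fun x hx y hy =>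
        (C (j + 1)).mul_pow_eq_one_of_lowerCentralSeries_eq_bot hp ?_ ?_ hx hy
      · rw [eq_bot_iff, ← h0]
        exact (Subgroup.lowerCentralSeries_antitone _ (by omega)).trans
          (lowerCentralSeries_le_of_commutator_le hcentral (j + 1) 0)
      · intro g hg
        exact ih (by omega) g
          (lowerCentralSeries_le_of_commutator_le hcentral 1 j (by rwa [add_comm]))
  exact fun x => key k le_rfl x (htop ▸ mem_top x)

/-- Hall's corollary: a finite `p`-group with a central series of length `k < p`,
each term of which is generated by elements of order dividing `p`, has exponent `p`. -/
theorem stmt0 {P : Type*} [Group P] [Finite P] (p : ℕ) (hp : p.Prime)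
    (hP : IsPGroup p P) (k : ℕ) (hk : k < p)
    (C : ℕ → Subgroup P)
    (h0 : C 0 = ⊥) (htop : C k = ⊤)
    (hmono : ∀ i, C i ≤ C (i + 1))
    (hnorm : ∀ i, (C i).Normal)
    (hcentral : ∀ i, ⁅(⊤ : Subgroup P), C (i + 1)⁆ ≤ C i)
    (hgen : ∀ i, C i = Subgroup.closure {x : P | x ∈ C i ∧ x ^ p = 1}) :
    ∀ x : P, x ^ p = 1 :=
  stmt0_general p hp k hk C h0 htop hcentral hgen
end

section
/- Let U be the group of unipotent upper triangular matrices in GL_n(F_q) and U_k = {(a_{ij}) ∈ U : a_{k,k+1} = 0}. An element x ∈ U stabilizes only the standard complete flag (among all complete flags in F_q^n) if and only if x ∉ U_k for every k with 1 ≤ k ≤ n-1; equivalently, if and only if all superdiagonal entries x_{k,k+1} are nonzero. -/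
lemma memspan {n : ℕ} {F : Type*} [Field F] (s : Set (Fin n)) (v : Fin n → F) :
    v ∈ Submodule.span F ((fun j : Fin n => (Pi.single j 1 : Fin n → F)) '' s) ↔
      ∀ j ∉ s, v j = 0 := by
  classical
  constructor
  · intro hv
    have hT : Submodule.span F ((fun j : Fin n => (Pi.single j 1 : Fin n → F)) '' s) ≤
        { carrier := {v : Fin n → F | ∀ j ∉ s, v j = 0},
          zero_mem' := fun j _ => rfl,
          add_mem' := by intro a b ha hb j hj; simp [Pi.add_apply, ha j hj, hb j hj],
          smul_mem' := by intro c a ha j hj; simp [Pi.smul_apply, ha j hj] } := by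
      rw [Submodule.span_le]
      rintro _ ⟨j, hjs, rfl⟩ j' hj'
      exact Pi.single_eq_of_ne (fun h : j' = j => hj' (h ▸ hjs)) 1
    exact hT hv
  · intro hv
    have hv' : v = ∑ j : Fin n, (v j) • (Pi.single j 1 : Fin n → F) := by
      funext j'
      rw [Finset.sum_apply]
      simp [Pi.single_apply]
    rw [hv']
    refine Submodule.sum_mem _ fun j _ => ?_
    by_cases hj : j ∈ s
    · exact Submodule.smul_mem _ _ (Submodule.subset_span ⟨j, hj, rfl⟩)
    · rw [hv j hj, zero_smul]; exact Submodule.zero_mem _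

lemma finrankspan {n m : ℕ} {F : Type*} [Field F] (g : Fin m → Fin n) (hg : Function.Injective g) :
    Module.finrank F (Submodule.span F
      ((fun j : Fin n => (Pi.single j 1 : Fin n → F)) '' Set.range g)) = m := by
  have h1 : ((fun j : Fin n => (Pi.single j 1 : Fin n → F)) '' Set.range g)
      = Set.range (fun j : Fin m => (Pi.single (g j) 1 : Fin n → F)) := by
    rw [← Set.range_comp]; rfl
  rw [h1]
  have hli : LinearIndependent F (fun j : Fin m => (Pi.single (g j) 1 : Fin n → F)) := by
    have hb := (Pi.basisFun F (Fin n)).linearIndependent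
    have he : (fun j : Fin m => (Pi.single (g j) 1 : Fin n → F)) = (⇑(Pi.basisFun F (Fin n))) ∘ g := by
      funext j; simp [Pi.basisFun_apply]
    rw [he]; exact hb.comp g hg
  simpa using finrank_span_eq_card hli

lemma invspan {n : ℕ} {F : Type*} [Field F] (x : Matrix (Fin n) (Fin n) F) (s : Set (Fin n))
    (hx : ∀ j ∉ s, ∀ l ∈ s, x j l = 0) (v : Fin n → F)
    (hv : v ∈ Submodule.span F ((fun j : Fin n => (Pi.single j 1 : Fin n → F)) '' s)) :
    x.mulVec v ∈ Submodule.span F ((fun j : Fin n => (Pi.single j 1 : Fin n → F)) '' s) := by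
  classical
  rw [memspan] at hv ⊢
  intro j hj
  have hmv : x.mulVec v j = ∑ l, x j l * v l := by
    simp [Matrix.mulVec, dotProduct]
  rw [hmv]
  refine Finset.sum_eq_zero fun l _ => ?_
  by_cases hl : l ∈ s
  · rw [hx j hj l hl, zero_mul]
  · rw [hv l hl, mul_zero]

lemma keylemma {n : ℕ} {F : Type*} [Field F] (x : Matrix (Fin n) (Fin n) F)
    (hxtri : ∀ i j : Fin n, j < i → x i j = 0)
    (hxdiag : ∀ i : Fin n, x i i = 1)
    (hsup : ∀ (k : ℕ) (hk : k + 1 < n), x ⟨k, Nat.lt_of_succ_lt hk⟩ ⟨k + 1, hk⟩ ≠ 0)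
    (V : Submodule F (Fin n → F)) (hV : ∀ v ∈ V, x.mulVec v ∈ V) :
    ∀ t, ∀ (ht : t < n), ∀ w ∈ V, (∀ j : Fin n, t < (j : ℕ) → w j = 0) → w ⟨t, ht⟩ ≠ 0 →
      Submodule.span F ((fun j : Fin n => (Pi.single j 1 : Fin n → F)) '' {j : Fin n | (j : ℕ) < t + 1}) ≤ V := by
  classical
  intro t
  induction t using Nat.strong_induction_on with
  | _ t IH =>
    intro ht w hw hlead hne
    -- step 1: span over {j | j < t} ≤ V
    have hSt : Submodule.span F ((fun j : Fin n => (Pi.single j 1 : Fin n → F)) '' {j : Fin n | (j : ℕ) < t}) ≤ V := by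
      rcases Nat.eq_zero_or_pos t with h0 | hpos
      · subst h0
        have : {j : Fin n | (j : ℕ) < 0} = ∅ := by ext j; simp
        rw [this]; simp
      · -- t = (t-1)+1
        obtain ⟨t', rfl⟩ : ∃ t', t = t' + 1 := ⟨t - 1, by omega⟩
        set w' : Fin n → F := x.mulVec w - w with hw'def
        have hw'V : w' ∈ V := Submodule.sub_mem _ (hV w hw) hw
        have hmv : ∀ j : Fin n, x.mulVec w j = ∑ l, x j l * w l := fun j => by
          simp [Matrix.mulVec, dotProduct]
        have ht' : t' < n := by omega
        have hlead' : ∀ j : Fin n, t' < (j : ℕ) → w' j = 0 := by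
          intro j hj
          have hjt : t' + 1 ≤ (j : ℕ) := hj
          have : x.mulVec w j = x j j * w j := by
            rw [hmv]
            refine Finset.sum_eq_single j (fun l _ hl => ?_) (by simp)
            rcases lt_or_gt_of_ne (fun h : (l:ℕ) = (j:ℕ) => hl (Fin.ext h)) with h | h
            · rw [hxtri j l (by exact h), zero_mul]
            · rw [hlead l (by omega), mul_zero]
          simp only [hw'def, Pi.sub_apply, this, hxdiag, one_mul, sub_self]
        have hne' : w' ⟨t', ht'⟩ ≠ 0 := by
          have ha : (⟨t', ht'⟩ : Fin n) ≠ ⟨t' + 1, ht⟩ := by simp [Fin.ext_iff]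
          have hsum : ∑ l, x ⟨t', ht'⟩ l * w l
              = ∑ l ∈ ({(⟨t', ht'⟩ : Fin n), ⟨t' + 1, ht⟩} : Finset (Fin n)), x ⟨t', ht'⟩ l * w l := by
            refine (Finset.sum_subset (Finset.subset_univ _) ?_).symm
            intro l _ hl
            simp only [Finset.mem_insert, Finset.mem_singleton] at hl
            push_neg at hl
            obtain ⟨h1, h2⟩ := hl
            have h1' : (l : ℕ) ≠ t' := fun h => h1 (Fin.ext h)
            have h2' : (l : ℕ) ≠ t' + 1 := fun h => h2 (Fin.ext h)
            rcases lt_or_gt_of_ne h1' with h | h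
            · rw [hxtri _ l (by exact h), zero_mul]
            · rw [hlead l (by omega), mul_zero]
          have : w' ⟨t', ht'⟩ = x ⟨t', ht'⟩ ⟨t' + 1, ht⟩ * w ⟨t' + 1, ht⟩ := by
            simp only [hw'def, Pi.sub_apply, hmv, hsum]
            rw [Finset.sum_pair ha]
            rw [hxdiag]
            ring
          rw [this]
          exact mul_ne_zero (hsup t' ht) hne
        exact IH t' (by omega) ht' w' hw'V hlead' hne'
    -- step 2: single t ∈ V
    have hu : w - w ⟨t, ht⟩ • (Pi.single ⟨t, ht⟩ 1 : Fin n → F) ∈ V := by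
      refine hSt ?_
      rw [memspan]
      intro j hj
      simp only [Set.mem_setOf_eq, not_lt] at hj
      rcases eq_or_lt_of_le hj with h | h
      · have hje : j = ⟨t, ht⟩ := Fin.ext h.symm
        subst hje
        simp
      · simp [hlead j h, Pi.single_eq_of_ne (fun hc : j = ⟨t, ht⟩ => by simp [hc] at h) 1]
    have hsingle : (Pi.single ⟨t, ht⟩ 1 : Fin n → F) ∈ V := by
      have h2 : w ⟨t, ht⟩ • (Pi.single ⟨t, ht⟩ 1 : Fin n → F) ∈ V := by
        have := Submodule.sub_mem _ hw hu
        simpa using this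
      have := Submodule.smul_mem V (w ⟨t, ht⟩)⁻¹ h2
      rwa [smul_smul, inv_mul_cancel₀ hne, one_smul] at this
    -- step 3
    rw [Submodule.span_le]
    rintro _ ⟨j, hjs, rfl⟩
    simp only [Set.mem_setOf_eq] at hjs
    rcases Nat.lt_or_ge (j : ℕ) t with h | h
    · exact hSt (Submodule.subset_span ⟨j, h, rfl⟩)
    · have hjt : (j : ℕ) = t := by omega
      have hje : j = ⟨t, ht⟩ := Fin.ext (by simp [hjt])
      subst hje
      exact hsingle


lemma setrange {n m : ℕ} (h : m ≤ n) :
    {j : Fin n | (j : ℕ) < m} = Set.range (Fin.castLE h) := by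
  ext j
  simp only [Set.mem_setOf_eq, Set.mem_range]
  constructor
  · intro hj; exact ⟨⟨(j : ℕ), hj⟩, Fin.ext rfl⟩
  · rintro ⟨a, rfl⟩; exact a.isLt

lemma finrankS {n m : ℕ} {F : Type*} [Field F] (h : m ≤ n) :
    Module.finrank F (Submodule.span F
      ((fun j : Fin n => (Pi.single j 1 : Fin n → F)) '' {j : Fin n | (j : ℕ) < m})) = m := by
  rw [setrange h]
  exact finrankspan _ (Fin.castLE_injective h)


/-- A unipotent upper triangular matrix over `F_q` stabilizes only the standard complete flag
if and only if all of its superdiagonal entries are nonzero. -/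
theorem stmt6 (n : ℕ) (F : Type*) [Field F] [Fintype F]
    (x : Matrix (Fin n) (Fin n) F)
    (hxtri : ∀ i j : Fin n, j < i → x i j = 0)
    (hxdiag : ∀ i : Fin n, x i i = 1) :
    (∀ V : Fin (n + 1) → Submodule F (Fin n → F),
        Monotone V → V 0 = ⊥ → V (Fin.last n) = ⊤ →
        (∀ i : Fin (n + 1), Module.finrank F (V i) = (i : ℕ)) →
        (∀ i : Fin (n + 1), ∀ v ∈ V i, x.mulVec v ∈ V i) →
        ∀ i : Fin (n + 1),
          V i = Submodule.span F
            ((fun j : Fin n => (Pi.single j 1 : Fin n → F)) '' {j : Fin n | (j : ℕ) < (i : ℕ)}))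
      ↔ ∀ (k : ℕ) (hk : k + 1 < n), x ⟨k, Nat.lt_of_succ_lt hk⟩ ⟨k + 1, hk⟩ ≠ 0 := by
  classical
  constructor
  · -- forward: contrapositive construction
    intro H k hk
    by_contra hx0
    set sW : Set (Fin n) := {j : Fin n | (j : ℕ) < k ∨ (j : ℕ) = k + 1} with hsW
    set W : Submodule F (Fin n → F) :=
      Submodule.span F ((fun j : Fin n => (Pi.single j 1 : Fin n → F)) '' sW) with hW
    set V' : Fin (n + 1) → Submodule F (Fin n → F) := fun i =>
      if (i : ℕ) = k + 1 then W
      else Submodule.span F ((fun j : Fin n => (Pi.single j 1 : Fin n → F)) '' {j : Fin n | (j : ℕ) < (i : ℕ)}) with hV'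
    have hmono : Monotone V' := by
      intro i i' hii'
      have hii'' : (i : ℕ) ≤ (i' : ℕ) := hii'
      simp only [hV']
      split_ifs with h1 h2 h2
      · exact le_refl _
      · -- i = k+1, i' ≠ k+1, so i' ≥ k+2 ; W ≤ span {j < i'}
        refine Submodule.span_mono (Set.image_mono ?_)
        intro j hj
        simp only [hsW, Set.mem_setOf_eq] at hj ⊢
        omega
      · -- i ≠ k+1, i' = k+1, so i ≤ k ; span {j < i} ≤ W
        refine Submodule.span_mono (Set.image_mono ?_)
        intro j hj
        simp only [hsW, Set.mem_setOf_eq] at hj ⊢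
        omega
      · exact Submodule.span_mono (Set.image_mono (fun j hj => by
          simp only [Set.mem_setOf_eq] at hj ⊢; omega))
    have h0 : V' 0 = ⊥ := by
      simp only [hV']
      rw [if_neg (by simp)]
      have : {j : Fin n | (j : ℕ) < ((0 : Fin (n+1)) : ℕ)} = ∅ := by ext j; simp
      rw [this]; simp
    have hlast : V' (Fin.last n) = ⊤ := by
      simp only [hV']
      rw [if_neg (by simp only [Fin.val_last]; omega)]
      rw [eq_top_iff]
      intro v _
      rw [memspan]
      intro j hj
      exact absurd (by simpa using j.isLt) hj
    have hVi : ∀ i : Fin (n + 1), V' i = if (i : ℕ) = k + 1 then W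
        else Submodule.span F ((fun j : Fin n => (Pi.single j 1 : Fin n → F)) '' {j : Fin n | (j : ℕ) < (i : ℕ)}) :=
      fun i => rfl
    have hrank : ∀ i : Fin (n + 1), Module.finrank F (V' i) = (i : ℕ) := by
      intro i
      by_cases h1 : (i : ℕ) = k + 1
      · rw [hVi i, if_pos h1]
        -- finrank W = k+1
        have hg : sW = Set.range (fun j : Fin (k + 1) =>
            if h : (j : ℕ) < k then (⟨(j : ℕ), by omega⟩ : Fin n) else ⟨k + 1, hk⟩) := by
          ext j
          simp only [hsW, Set.mem_setOf_eq, Set.mem_range]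
          constructor
          · intro hj
            rcases hj with hj | hj
            · exact ⟨⟨(j : ℕ), by omega⟩, by simp [hj]⟩
            · exact ⟨⟨k, by omega⟩, by simp [Fin.ext_iff, hj]⟩
          · rintro ⟨a, rfl⟩
            split_ifs with ha
            · left; exact ha
            · right; rfl
        have hginj : Function.Injective (fun j : Fin (k + 1) =>
            if h : (j : ℕ) < k then (⟨(j : ℕ), by omega⟩ : Fin n) else ⟨k + 1, hk⟩) := by
          intro a b hab
          simp only at hab
          split_ifs at hab with ha hb hb
          · exact Fin.ext (by simpa [Fin.ext_iff] using hab)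
          · exfalso; have := congrArg Fin.val hab; simp at this; omega
          · exfalso; have := congrArg Fin.val hab; simp at this; omega
          · exact Fin.ext (by omega)
        have hfrW : Module.finrank F W = k + 1 := by
          rw [hW, hg]
          exact finrankspan _ hginj
        rw [hfrW, h1]
      · rw [hVi i, if_neg h1]
        exact finrankS (by omega)
    have hinv : ∀ i : Fin (n + 1), ∀ v ∈ V' i, x.mulVec v ∈ V' i := by
      intro i v hv
      by_cases h1 : (i : ℕ) = k + 1
      · rw [hVi i, if_pos h1] at hv ⊢
        refine invspan x sW ?_ v hv
        intro j hj l hl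
        simp only [hsW, Set.mem_setOf_eq] at hj hl
        push_neg at hj
        rcases hl with hl | hl
        · exact hxtri j l (by omega)
        · rcases Nat.lt_or_ge (l : ℕ) (j : ℕ) with h | h
          · exact hxtri j l h
          · -- l ≥ j, l = k+1, j ≥ k, j ≠ k+1 → j = k
            have hjk : (j : ℕ) = k := by omega
            have hje : j = ⟨k, Nat.lt_of_succ_lt hk⟩ := Fin.ext (by simp [hjk])
            have hle : l = ⟨k + 1, hk⟩ := Fin.ext (by simp [hl])
            subst hle
            subst hje
            exact hx0
      · rw [hVi i, if_neg h1] at hv ⊢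
        refine invspan x _ ?_ v hv
        intro j hj l hl
        simp only [Set.mem_setOf_eq] at hj hl
        exact hxtri j l (by omega)
    have := H V' hmono h0 hlast hrank hinv ⟨k + 1, by omega⟩
    rw [hVi, if_pos rfl] at this
    -- e_{k+1} ∈ W but not in span {j < k+1}
    have hmem : (Pi.single (⟨k + 1, hk⟩ : Fin n) 1 : Fin n → F) ∈ W :=
      Submodule.subset_span ⟨⟨k + 1, hk⟩, by simp [hsW], rfl⟩
    rw [this] at hmem
    rw [memspan] at hmem
    have := hmem ⟨k + 1, hk⟩ (by simp)
    simp at this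
  · -- backward
    intro hsup V hmono h0 hlast hrank hinv i
    have hile : (i : ℕ) ≤ n := by omega
    have hle : V i ≤ Submodule.span F
        ((fun j : Fin n => (Pi.single j 1 : Fin n → F)) '' {j : Fin n | (j : ℕ) < (i : ℕ)}) := by
      intro v hv
      by_contra hns
      rw [memspan] at hns
      push_neg at hns
      obtain ⟨j₀, hj₀s, hj₀⟩ := hns
      simp only [Set.mem_setOf_eq, not_lt] at hj₀s
      set s : Finset (Fin n) := Finset.univ.filter (fun j => v j ≠ 0) with hs
      have hsne : s.Nonempty := ⟨j₀, by simp [hs, hj₀]⟩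
      set m : Fin n := s.max' hsne with hm
      have hvm : v m ≠ 0 := by
        have := s.max'_mem hsne
        simp only [hs, Finset.mem_filter] at this
        exact this.2
      have hlead : ∀ j : Fin n, (m : ℕ) < (j : ℕ) → v j = 0 := by
        intro j hj
        by_contra hvj
        have hjs : j ∈ s := by simp [hs, hvj]
        have := s.le_max' j hjs
        exact absurd (Fin.lt_iff_val_lt_val.mpr hj) (not_lt.mpr this)
      have him : (i : ℕ) ≤ (m : ℕ) := le_trans hj₀s (Fin.le_iff_val_le_val.mp (s.le_max' j₀ (by simp [hs, hj₀])))
      have hkey := keylemma x hxtri hxdiag hsup (V i) (hinv i) (m : ℕ) m.isLt v hv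
        hlead (by simpa using hvm)
      have hfr : (m : ℕ) + 1 ≤ Module.finrank F (V i) := by
        have h1 := finrankS (F := F) (n := n) (m := (m : ℕ) + 1) m.isLt
        calc (m : ℕ) + 1 = _ := h1.symm
          _ ≤ Module.finrank F (V i) := Submodule.finrank_mono hkey
      rw [hrank i] at hfr
      omega
    refine Submodule.eq_of_le_of_finrank_le hle ?_
    rw [hrank i, finrankS hile]
end

section
/- No root α of a reduced crystallographic root system Φ is divisible by an integer m > 1 within the root lattice ℤΦ. -/
/-- A reduced crystallographic root system, presented concretely via a positive definite
symmetric bilinear form `B` on a rational vector space. -/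
structure ReducedCrystRootSystem (V : Type*) [AddCommGroup V] [Module ℚ V]
    (B : V →ₗ[ℚ] V →ₗ[ℚ] ℚ) where
  Φ : Finset V
  symm : ∀ x y : V, B x y = B y x
  posdef : ∀ x : V, x ≠ 0 → 0 < B x x
  span_eq : Submodule.span ℚ (Φ : Set V) = ⊤
  zero_not_mem : (0 : V) ∉ Φ
  reflect_mem : ∀ α ∈ Φ, ∀ β ∈ Φ, β - (2 * B β α / B α α) • α ∈ Φ
  crystallographic : ∀ α ∈ Φ, ∀ β ∈ Φ, ∃ z : ℤ, 2 * B β α / B α α = (z : ℚ)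
  reduced : ∀ α ∈ Φ, ∀ c : ℚ, c • α ∈ Φ → c = 1 ∨ c = -1

/-!
Pick a functional `ℓ`, nonzero on every root, for which `α` is an indecomposable `ℓ`-positive
root: take `x₀ ⊥ α` off the hyperplanes `γ^⊥` (`γ ≠ ±α`) and `ℓ = B(·, x₀) + t B(·, α)` with
`t > 0` small. The indecomposable `ℓ`-positive roots form a base `Δ`: two of them have
non-positive inner product (otherwise their difference would be a root, decomposing one of them),
so `Δ` is linearly independent, and every positive root is a sum of elements of `Δ`. Thus `α` is
part of a `ℤ`-basis of `ℤΦ`, and its coordinate `1` is not divisible by `m > 1`.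
-/

open Filter Topology in
lemma exists_pos_forall_mul_add_mul_pos {𝕜 ι : Type*} [Field 𝕜] [LinearOrder 𝕜]
    [IsStrictOrderedRing 𝕜] [TopologicalSpace 𝕜] [OrderTopology 𝕜] [Finite ι]
    (a b : ι → 𝕜) (ha : ∀ i, a i ≠ 0) : ∃ t : 𝕜, 0 < t ∧ ∀ i, 0 < a i * (a i + t * b i) := by
  have : ∀ᶠ t in 𝓝 (0 : 𝕜), ∀ i, 0 < a i * (a i + t * b i) := by
    refine eventually_all.2 fun i => ?_
    have hcont : Continuous fun t : 𝕜 => a i * (a i + t * b i) := by fun_prop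
    exact (hcont.tendsto 0).eventually (lt_mem_nhds (by simpa using mul_self_pos.2 (ha i)))
  obtain ⟨t, ht, ht₀⟩ := ((this.filter_mono nhdsWithin_le_nhds).and
    (self_mem_nhdsWithin : Set.Ioi (0 : 𝕜) ∈ 𝓝[>] 0)).exists
  exact ⟨t, ht₀, ht⟩

lemma LinearIndependent.eq_one_of_eq_nsmul {ι M : Type*} [AddCommGroup M] {v : ι → M}
    (hv : LinearIndependent ℤ v) (i : ι) {m : ℕ} {β : M}
    (hβ : β ∈ AddSubgroup.closure (Set.range v)) (h : v i = m • β) : m = 1 := by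
  let b := Module.Basis.span hv
  let β' : Submodule.span ℤ (Set.range v) :=
    ⟨β, by rwa [← Submodule.mem_toAddSubgroup, Submodule.span_int_eq_addSubgroupClosure]⟩
  have hb : b i = m • β' := Subtype.ext (by simp [b, β', Module.Basis.span_apply, h])
  have hcoord : (m : ℤ) * b.repr β' i = 1 := by
    simpa [natCast_zsmul] using (congrArg (fun x => b.repr x i) hb).symm
  exact_mod_cast Int.eq_one_of_mul_eq_one_right (Int.natCast_nonneg m) hcoord

namespace ReducedCrystRootSystem

variable {V : Type*} [AddCommGroup V] [Module ℚ V] {B : V →ₗ[ℚ] V →ₗ[ℚ] ℚ}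
  (RS : ReducedCrystRootSystem V B) {α γ δ : V}

lemma ne_zero_of_mem (hγ : γ ∈ RS.Φ) : γ ≠ 0 := ne_of_mem_of_not_mem hγ RS.zero_not_mem

lemma apply_self_pos (hγ : γ ∈ RS.Φ) : 0 < B γ γ := RS.posdef γ (RS.ne_zero_of_mem hγ)

lemma neg_mem (hγ : γ ∈ RS.Φ) : -γ ∈ RS.Φ := by
  have h := RS.reflect_mem γ hγ γ hγ
  rwa [mul_div_assoc, div_self (RS.apply_self_pos hγ).ne', mul_one, two_smul,
    sub_add_cancel_left] at h

instance : InvolutiveNeg RS.Φ where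
  neg γ := ⟨-γ, RS.neg_mem γ.2⟩
  neg_neg γ := Subtype.ext (neg_neg (γ : V))

lemma eq_or_eq_neg_of_eq_smul (hγ : γ ∈ RS.Φ) (hδ : δ ∈ RS.Φ) {c : ℚ} (h : γ = c • δ) :
    γ = δ ∨ γ = -δ := by
  rcases RS.reduced δ hδ c (h ▸ hγ) with rfl | rfl <;> simp [h]

lemma linearIndependent_pair_of_ne (hγ : γ ∈ RS.Φ) (hδ : δ ∈ RS.Φ) (h₁ : γ ≠ δ) (h₂ : γ ≠ -δ) :
    LinearIndependent ℚ ![δ, γ] :=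
  (LinearIndependent.pair_iff' (RS.ne_zero_of_mem hδ)).2 fun _ h =>
    (RS.eq_or_eq_neg_of_eq_smul hγ hδ h.symm).elim h₁ h₂

lemma apply_sq_lt (hγ : γ ∈ RS.Φ) (hδ : δ ∈ RS.Φ) (h₁ : γ ≠ δ) (h₂ : γ ≠ -δ) :
    B γ δ ^ 2 < B γ γ * B δ δ := by
  rw [← RS.symm, mul_comm]
  exact (LinearMap.BilinForm.apply_sq_lt_iff_linearIndependent_of_symm B RS.posdef ⟨RS.symm⟩
    δ γ).2 (RS.linearIndependent_pair_of_ne hγ hδ h₁ h₂)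

lemma sub_mem_of_apply_pos (hγ : γ ∈ RS.Φ) (hδ : δ ∈ RS.Φ) (h₁ : γ ≠ δ) (h₂ : γ ≠ -δ)
    (hB : 0 < B γ δ) : γ - δ ∈ RS.Φ := by
  have hγγ := RS.apply_self_pos hγ
  have hδδ := RS.apply_self_pos hδ
  obtain ⟨z₁, hz₁⟩ := RS.crystallographic δ hδ γ hγ
  obtain ⟨z₂, hz₂⟩ := RS.crystallographic γ hγ δ hδ
  rw [RS.symm δ γ] at hz₂
  have hz₁pos : 0 < z₁ := by exact_mod_cast (hz₁ ▸ by positivity : (0 : ℚ) < z₁)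
  have hz₂pos : 0 < z₂ := by exact_mod_cast (hz₂ ▸ by positivity : (0 : ℚ) < z₂)
  -- the product of the two Cartan integers is `4 cos² θ < 4`
  have hprod : z₁ * z₂ < 4 := by
    suffices (z₁ : ℚ) * z₂ < 4 by exact_mod_cast this
    rw [← hz₁, ← hz₂, div_mul_div_comm, div_lt_iff₀ (by positivity)]
    nlinarith [RS.apply_sq_lt hγ hδ h₁ h₂]
  have : z₁ = 1 ∨ z₂ = 1 := by
    by_contra!
    nlinarith [show 2 ≤ z₁ by omega, show 2 ≤ z₂ by omega]
  rcases this with rfl | rfl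
  · simpa [hz₁] using RS.reflect_mem δ hδ γ hγ
  · have := RS.neg_mem (RS.reflect_mem γ hγ δ hδ)
    rwa [RS.symm δ γ, hz₂, Int.cast_one, one_smul, neg_sub] at this

lemma exists_apply_eq_zero_forall_apply_ne_zero (hα : α ∈ RS.Φ) :
    ∃ x₀ : V, B α x₀ = 0 ∧ ∀ γ ∈ RS.Φ, γ ≠ α → γ ≠ -α → B γ x₀ ≠ 0 := by
  obtain ⟨x₀, hx₀, hne⟩ := Module.Dual.exists_forall_mem_ne_zero_of_forall_exists
    (ι := {γ : RS.Φ // (γ : V) ≠ α ∧ (γ : V) ≠ -α}) (LinearMap.ker (B α)) (fun γ => B γ.1)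
    fun ⟨⟨γ, hγ⟩, h₁, h₂⟩ => by
      set w := γ - (B α γ / B α α) • α
      have hαα := (RS.apply_self_pos hα).ne'
      have hw : w ≠ 0 := sub_ne_zero.2 fun h => (RS.eq_or_eq_neg_of_eq_smul hγ hα h).elim h₁ h₂
      have hαw : B α w = 0 := by
        simp only [w, map_sub, map_smul, smul_eq_mul]
        field_simp
        ring
      have hγw : B γ w = B w w := by
        rw [show B w w = B γ w - (B α γ / B α α) * B α w by simp [w, RS.symm α], hαw,
          mul_zero, sub_zero]
      exact ⟨w, hαw, hγw ▸ (RS.posdef w hw).ne'⟩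
  exact ⟨x₀, hx₀, fun γ hγ h₁ h₂ => hne ⟨⟨γ, hγ⟩, h₁, h₂⟩⟩

abbrev baseOf (ℓ : Module.Dual ℚ V) : Set RS.Φ :=
  IsAddIndecomposable.baseOf ((↑) : RS.Φ → V) (ℓ : V →+ ℚ)

lemma exists_dual_mem_baseOf (hα : α ∈ RS.Φ) :
    ∃ ℓ : Module.Dual ℚ V, (∀ γ : RS.Φ, ℓ γ ≠ 0) ∧ ⟨α, hα⟩ ∈ RS.baseOf ℓ := by
  obtain ⟨x₀, hx₀α, hx₀⟩ := RS.exists_apply_eq_zero_forall_apply_ne_zero hα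
  obtain ⟨t, ht, hsign⟩ := exists_pos_forall_mul_add_mul_pos
    (fun γ : {γ : RS.Φ // (γ : V) ≠ α ∧ (γ : V) ≠ -α} => B γ.1 x₀) (fun γ => B γ.1 α)
    fun γ => hx₀ _ γ.1.2 γ.2.1 γ.2.2
  set ℓ : Module.Dual ℚ V := B.flip x₀ + t • B.flip α
  have hℓ (γ : V) : ℓ γ = B γ x₀ + t * B γ α := rfl
  have hℓα : 0 < ℓ α := by
    rw [hℓ, hx₀α, zero_add]
    exact mul_pos ht (RS.apply_self_pos hα)
  have hℓγ (γ : V) (hγ : γ ∈ RS.Φ) (h₁ : γ ≠ α) (h₂ : γ ≠ -α) : 0 < B γ x₀ * ℓ γ :=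
    hsign ⟨⟨γ, hγ⟩, h₁, h₂⟩
  have hpos (β : V) (hβ : β ∈ RS.Φ) (hβℓ : 0 < ℓ β) : β = α ∨ 0 < B β x₀ := by
    by_cases h₁ : β = α
    · exact .inl h₁
    by_cases h₂ : β = -α
    · rw [h₂, map_neg] at hβℓ
      linarith
    exact .inr (pos_of_mul_pos_left (hℓγ β hβ h₁ h₂) hβℓ.le)
  refine ⟨ℓ, fun ⟨γ, hγ⟩ => ?_, hℓα, ?_⟩
  · by_cases h₁ : γ = α
    · exact h₁ ▸ hℓα.ne'
    by_cases h₂ : γ = -α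
    · simpa [h₂] using hℓα.ne'
    exact right_ne_zero_of_mul (hℓγ γ hγ h₁ h₂).ne'
  · rintro ⟨β₁, hβ₁⟩ (hβ₁ℓ : 0 < ℓ β₁) ⟨β₂, hβ₂⟩ (hβ₂ℓ : 0 < ℓ β₂) (h : α = β₁ + β₂)
    rcases hpos β₁ hβ₁ hβ₁ℓ with rfl | h₁
    · exact .inr (by simpa using h)
    rcases hpos β₂ hβ₂ hβ₂ℓ with rfl | h₂
    · exact .inl (by simpa using h)
    have : B α x₀ = B β₁ x₀ + B β₂ x₀ := by rw [h, map_add, LinearMap.add_apply]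
    linarith

variable {RS} {ℓ : Module.Dual ℚ V}

lemma apply_le_zero_of_mem_baseOf (hℓ : ∀ γ : RS.Φ, ℓ γ ≠ 0) {δ₁ δ₂ : RS.Φ}
    (h₁ : δ₁ ∈ RS.baseOf ℓ) (h₂ : δ₂ ∈ RS.baseOf ℓ) (hne : δ₁ ≠ δ₂) : B δ₁ δ₂ ≤ 0 := by
  by_contra! hB
  have hpos₁ : 0 < ℓ δ₁ := IsAddIndecomposable.baseOf_subset_pos _ _ h₁
  have hpos₂ : 0 < ℓ δ₂ := IsAddIndecomposable.baseOf_subset_pos _ _ h₂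
  have hne' : (δ₁ : V) ≠ -δ₂ := fun h => by
    rw [h, map_neg] at hpos₁
    linarith
  exact IsAddIndecomposable.pairwise_baseOf_sub_notMem _ (fun _ => rfl) _ hℓ h₁ h₂ hne
    ⟨⟨_, RS.sub_mem_of_apply_pos δ₁.2 δ₂.2 (Subtype.coe_ne_coe.2 hne) hne' hB⟩, rfl⟩

lemma linearIndepOn_baseOf (hℓ : ∀ γ : RS.Φ, ℓ γ ≠ 0) :
    LinearIndepOn ℚ ((↑) : RS.Φ → V) (RS.baseOf ℓ) :=
  LinearMap.BilinForm.linearIndependent_of_pairwise_le_zero B RS.posdef ℓ _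
    (fun δ => IsAddIndecomposable.baseOf_subset_pos _ _ δ.2)
    fun δ₁ δ₂ hne => apply_le_zero_of_mem_baseOf hℓ δ₁.2 δ₂.2 (Subtype.coe_ne_coe.2 hne)

lemma closure_baseOf (hℓ : ∀ γ : RS.Φ, ℓ γ ≠ 0) :
    AddSubgroup.closure (((↑) : RS.Φ → V) '' RS.baseOf ℓ) =
      AddSubgroup.closure (RS.Φ : Set V) := by
  rw [AddSubgroup.closure_image_isAddIndecomposable_baseOf _ (fun _ => rfl) _ hℓ]
  simp

end ReducedCrystRootSystem

/-- No root of a reduced crystallographic root system is divisible by an integer `m > 1`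
in the root lattice `ℤΦ`. -/
theorem stmt14 (V : Type*) [AddCommGroup V] [Module ℚ V]
    (B : V →ₗ[ℚ] V →ₗ[ℚ] ℚ) (RS : ReducedCrystRootSystem V B) :
    ∀ α ∈ RS.Φ, ∀ m : ℕ, 1 < m →
      ∀ β ∈ AddSubgroup.closure (RS.Φ : Set V), α ≠ m • β := by
  intro α hα m hm β hβ hαβ
  obtain ⟨ℓ, hℓ, hαℓ⟩ := RS.exists_dual_mem_baseOf hα
  have hli : LinearIndependent ℤ fun δ : RS.baseOf ℓ => (δ : V) :=
    (RS.linearIndepOn_baseOf hℓ).restrict_scalars' ℤ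
  have hβℓ : β ∈ AddSubgroup.closure (Set.range fun δ : RS.baseOf ℓ => (δ : V)) := by
    rwa [← Set.image_eq_range, RS.closure_baseOf hℓ]
  exact hm.ne' (hli.eq_one_of_eq_nsmul ⟨⟨α, hα⟩, hαℓ⟩ hβℓ hαβ)
end
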